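/- arXiv:1804.01413 — 3 statements merged into one kernel-verified Lean document; each statement's English description precedes it below -/
import Mathlib

section
/- Every element of the fundamental group of the circle is an integer power of the class of the standard loop: for every g ∈ π₁(S¹, 1) there exists n ∈ ℤ with g = [loop]^n; equivalently, π₁(S¹, 1) is generated by the homotopy class of the loop t ↦ exp(2πit). -/
attribute [local instance] Path.Homotopic.setoid

/-- The standard loop in the circle based at `1`, given by `t ↦ exp (2 π i t)`. -/
noncomputable def circleLoop : Path (1 : Circle) 1 where
  toFun t := Circle.exp (2 * Real.pi * t)
  continuous_toFun := Circle.exp.continuous.comp (continuous_const.mul continuous_subtype_val)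
  source' := by simp
  target' := by simp

/-- The homotopy class of the standard loop, as an element of the fundamental group of
the circle. -/
noncomputable def circleLoopClass : FundamentalGroup Circle 1 :=
  FundamentalGroup.fromPath (X := TopCat.of Circle) ⟦circleLoop⟧

/-!
`Circle.exp : ℝ → S¹` is a covering map whose deck group is `2πℤ` acting by translation, and `ℝ`
is simply connected, so monodromy on the fibre over `1`, read off at the lift `0`, embeds
`π₁(S¹, 1)` into `(2πℤ)ᵐᵒᵖ`. The standard loop lifts to `t ↦ 2πt`, which ends at `2π`, so its
class goes to a generator; injectivity then makes every element of `π₁(S¹, 1)` a power of it.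
-/

theorem IsCoveringMap.monodromy_mk_eq_of_lift {E X : Type*} [TopologicalSpace E]
    [TopologicalSpace X] {p : E → X} (cov : IsCoveringMap p) {x y : X} {γ : Path x y}
    {e e' : E} (Γ : Path e e') (hΓ : p ∘ Γ = γ) (he : e ∈ p ⁻¹' {x}) (he' : e' ∈ p ⁻¹' {y}) :
    cov.monodromy ⟦γ⟧ ⟨e, he⟩ = ⟨e', he'⟩ :=
  Subtype.ext <| (congrFun ((cov.eq_liftPath_iff _).mpr ⟨Γ.continuous, hΓ, Γ.source⟩) 1).symm.trans
    Γ.target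

theorem exists_eq_zpow_op_ofAdd_generator {A : Type*} [AddGroup A] (a : A)
    (h : (Multiplicative (AddSubgroup.zmultiples a))ᵐᵒᵖ) :
    ∃ n : ℤ, h = MulOpposite.op (Multiplicative.ofAdd ⟨a, AddSubgroup.mem_zmultiples a⟩) ^ n := by
  obtain ⟨⟨_, n, rfl⟩⟩ := h
  exact ⟨n, rfl⟩

theorem monodromy_circleLoop :
    Circle.isCoveringMap_exp.monodromy ⟦circleLoop⟧ ⟨0, Circle.exp_zero⟩ =
      ⟨2 * Real.pi, Circle.exp_two_pi⟩ :=
  Circle.isCoveringMap_exp.monodromy_mk_eq_of_lift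
    { toFun t := 2 * Real.pi * t, source' := by simp, target' := by simp } rfl _ _

theorem fundamentalGroupToMulOpposite_circleLoopClass :
    Circle.isAddQuotientCoveringMap_exp.fundamentalGroupToMulOpposite ⟨0, Circle.exp_zero⟩
      circleLoopClass =
      MulOpposite.op (Multiplicative.ofAdd ⟨2 * Real.pi, AddSubgroup.mem_zmultiples _⟩) := by
  rw [IsAddQuotientCoveringMap.fundamentalGroupToMulOpposite_apply_eq_Iff]
  exact (add_zero _).trans (congrArg Subtype.val monodromy_circleLoop).symm

/-- Every element of the fundamental group of the circle is an integer power of the class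
of the standard loop `t ↦ exp (2 π i t)`. -/
theorem circle_fundamentalGroup_generated_by_loop
    (g : FundamentalGroup Circle 1) : ∃ n : ℤ, g = circleLoopClass ^ n := by
  let φ := Circle.isAddQuotientCoveringMap_exp.fundamentalGroupToMulOpposite ⟨0, Circle.exp_zero⟩
  have hφ : Function.Injective φ :=
    Circle.isAddQuotientCoveringMap_exp.fundamentalGroupToMulOpposite_injective _
  obtain ⟨n, hn⟩ := exists_eq_zpow_op_ofAdd_generator (2 * Real.pi) (φ g)
  refine ⟨n, hφ ?_⟩
  rw [hn, map_zpow, fundamentalGroupToMulOpposite_circleLoopClass]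
end

section
/- Every element of the fundamental group of the torus is a product of integer powers of the classes of the two canonical loops: for every g ∈ π₁(S¹ × S¹, (1,1)) there exist n, m ∈ ℤ with g = [β]^n * [α]^m. -/
attribute [local instance] Path.Homotopic.setoid

/-- The loop `α` in the torus based at `(1, 1)`, given by `t ↦ (exp (2 π i t), 1)`. -/
noncomputable def torusLoopA : Path ((1 : Circle), (1 : Circle)) ((1 : Circle), (1 : Circle)) :=
  circleLoop.prod (Path.refl (1 : Circle))

/-- The loop `β` in the torus based at `(1, 1)`, given by `t ↦ (1, exp (2 π i t))`. -/
noncomputable def torusLoopB : Path ((1 : Circle), (1 : Circle)) ((1 : Circle), (1 : Circle)) :=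
  (Path.refl (1 : Circle)).prod circleLoop

/-- The homotopy class of `α` in the fundamental group of the torus. -/
noncomputable def torusClassA : FundamentalGroup (Circle × Circle) ((1 : Circle), (1 : Circle)) :=
  FundamentalGroup.fromPath (X := TopCat.of (Circle × Circle)) ⟦torusLoopA⟧

/-- The homotopy class of `β` in the fundamental group of the torus. -/
noncomputable def torusClassB : FundamentalGroup (Circle × Circle) ((1 : Circle), (1 : Circle)) :=
  FundamentalGroup.fromPath (X := TopCat.of (Circle × Circle)) ⟦torusLoopB⟧

/-!
`Circle.exp : ℝ → S¹` is a covering map whose deck group `2πℤ` is cyclic, and `ℝ` is simply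
connected, so the monodromy identifies `π₁(S¹, 1)` with `2πℤ`; the class of `circleLoop`, whose
lift from `0` ends at `2π`, corresponds to the generator. A loop in `S¹ × S¹` is the product of
its two projections, and taking products of loops is a homomorphism
`π₁(S¹) × π₁(S¹) → π₁(S¹ × S¹)`, so `(a, b) = (1, b) * (a, 1)` gives the decomposition.
-/

open Real

namespace IsAddQuotientCoveringMap

variable {E X G : Type*} [TopologicalSpace E] [TopologicalSpace X] [AddGroup G] [AddAction G E]
  {p : E → X}

theorem exists_eq_zpow_of_monodromy_eq_vadd [SimplyConnectedSpace E]
    (hp : IsAddQuotientCoveringMap p G) {x : X} {e : p ⁻¹' {x}} {a : G}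
    (ha : ∀ g : G, ∃ k : ℤ, k • a = g) {γ : FundamentalGroup X x}
    (hγ : (hp.isCoveringMap.monodromy γ e : E) = a +ᵥ (e : E)) (g : FundamentalGroup X x) :
    ∃ n : ℤ, g = γ ^ n := by
  set φ := hp.fundamentalGroupToMulOpposite e
  have hφγ : φ γ = MulOpposite.op (Multiplicative.ofAdd a) :=
    hp.fundamentalGroupToMulOpposite_apply_eq_Iff.mpr hγ.symm
  obtain ⟨n, hn⟩ := ha (φ g).unop.toAdd
  refine ⟨n, hp.fundamentalGroupToMulOpposite_injective e ?_⟩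
  rw [map_zpow, hφγ, ← MulOpposite.op_zpow, ← ofAdd_zsmul, hn]
  rfl

end IsAddQuotientCoveringMap

noncomputable def circleLoopLift : Path (0 : ℝ) (2 * π) where
  toFun t := 2 * π * t
  continuous_toFun := by fun_prop
  source' := by simp
  target' := by simp

theorem circle_fundamentalGroup_exists_eq_zpow (g : FundamentalGroup Circle 1) :
    ∃ n : ℤ, g = FundamentalGroup.fromPath ⟦circleLoop⟧ ^ n := by
  let hp := Circle.isAddQuotientCoveringMap_exp
  refine hp.exists_eq_zpow_of_monodromy_eq_vadd (e := ⟨0, by simp⟩)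
    (a := ⟨2 * π, AddSubgroup.mem_zmultiples _⟩) ?generates ?monodromy g
  case generates =>
    rintro ⟨b, hb⟩
    obtain ⟨k, rfl⟩ := AddSubgroup.mem_zmultiples_iff.mp hb
    exact ⟨k, rfl⟩
  case monodromy =>
    have hend : 2 * π ∈ Circle.exp ⁻¹' {1} := by simp
    rw [hp.isCoveringMap.monodromy_eq_of_map_eq (ey := ⟨2 * π, hend⟩) ⟦circleLoopLift⟧ rfl]
    simp

namespace FundamentalGroup

variable {X Y : Type*} [TopologicalSpace X] [TopologicalSpace Y] {x : X} {y : Y}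

def prodHom : FundamentalGroup X x × FundamentalGroup Y y →* FundamentalGroup (X × Y) (x, y) where
  toFun g := Path.Homotopic.prod g.1 g.2
  map_one' := rfl
  -- `g * h` is the class of `h.trans g`
  map_mul' g h := (Path.Homotopic.comp_prod_eq_prod_comp h.1 h.2 g.1 g.2).symm

theorem prodHom_projLeft_projRight (g : FundamentalGroup (X × Y) (x, y)) :
    prodHom (Path.Homotopic.projLeft g, Path.Homotopic.projRight g) = g :=
  Path.Homotopic.prod_projLeft_projRight g

end FundamentalGroup

/-- Every element of the fundamental group of the torus is a product of integer powers of
the classes of the two canonical loops: `g = [β]^n * [α]^m`. -/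
theorem torus_fundamentalGroup_generated_by_loops
    (g : FundamentalGroup (Circle × Circle) ((1 : Circle), (1 : Circle))) :
    ∃ n m : ℤ, g = torusClassB ^ n * torusClassA ^ m := by
  obtain ⟨m, hm⟩ := circle_fundamentalGroup_exists_eq_zpow (Path.Homotopic.projLeft g)
  obtain ⟨n, hn⟩ := circle_fundamentalGroup_exists_eq_zpow (Path.Homotopic.projRight g)
  set c : FundamentalGroup Circle 1 := FundamentalGroup.fromPath ⟦circleLoop⟧
  refine ⟨n, m, ?_⟩
  calc g = FundamentalGroup.prodHom (Path.Homotopic.projLeft g, Path.Homotopic.projRight g) :=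
        (FundamentalGroup.prodHom_projLeft_projRight g).symm
    _ = FundamentalGroup.prodHom ((1, c) ^ n * (c, 1) ^ m) := by
        rw [hm, hn, Prod.pow_mk, Prod.pow_mk, Prod.mk_mul_mk, one_zpow, one_zpow, mul_one, one_mul]
    _ = torusClassB ^ n * torusClassA ^ m := by
        rw [map_mul, map_zpow, map_zpow]
        rfl
end

section
/- The fundamental group of the real projective plane is nontrivial: there exists an element g ∈ π₁(ℝP², x₀) with g ≠ 1; such an element is given by the class of the loop obtained as the image in ℝP² of a path in the unit sphere S² joining a point to its antipode. -/
open scoped LinearAlgebra.Projectivization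

/-- The real projective plane: the space of lines through the origin in `ℝ³`. -/
abbrev RealProjectivePlane : Type :=
  Projectivization ℝ (EuclideanSpace ℝ (Fin 3))

/-- The quotient topology on the real projective plane, induced from the subspace of
nonzero vectors of `ℝ³`. -/
noncomputable instance : TopologicalSpace RealProjectivePlane :=
  inferInstanceAs (TopologicalSpace
    (Quotient (projectivizationSetoid ℝ (EuclideanSpace ℝ (Fin 3)))))

attribute [local instance] Path.Homotopic.setoid

/-- The natural quotient map from nonzero vectors of `ℝ³` onto the real projective plane
is continuous. -/
lemma continuous_projectivization_mk' :
    Continuous (Projectivization.mk' ℝ :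
      {u : EuclideanSpace ℝ (Fin 3) // u ≠ 0} → RealProjectivePlane) :=
  continuous_quotient_mk'

/-!
The unit sphere `S²` double covers `ℝP²` via `u ↦ [u]`, with deck group `{±1}`. A path in `S²`
from `u` to `-u` projects to a loop at `[u]` whose lift starting at `u` ends at `-u ≠ u`. Lifts of
path-homotopic paths end at the same point and the constant loop lifts to a constant path, so this
loop is not null-homotopic.
-/

open Topology Metric

theorem IsCoveringMap.not_homotopic_refl_of_lift {E X : Type*} [TopologicalSpace E]
    [TopologicalSpace X] {p : E → X} (cov : IsCoveringMap p) {x : X} {γ : Path x x}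
    {e₀ e₁ : E} (Γ : Path e₀ e₁) (hΓ : ∀ t, p (Γ t) = γ t) (hne : e₀ ≠ e₁) :
    ¬ γ.Homotopic (Path.refl x) := by
  intro h
  have hx : x = p e₀ := by rw [← γ.source, ← hΓ, Γ.source]
  have hγ : γ.toContinuousMap 0 = p e₀ := γ.source.trans hx
  have hlift : Γ.toContinuousMap = cov.liftPath γ.toContinuousMap e₀ hγ :=
    (cov.eq_liftPath_iff' _).mpr ⟨funext hΓ, Γ.source⟩
  have hconst : cov.liftPath (Path.refl x).toContinuousMap e₀ hx = .const _ e₀ :=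
    cov.liftPath_const hx
  have hend := cov.liftPath_apply_one_eq_of_homotopicRel h e₀ hγ hx
  rw [← hlift, hconst] at hend
  exact hne (hend.symm.trans Γ.target)

theorem eq_one_of_smul_mem_ball {E : Type*} [NormedAddCommGroup E] [NormedSpace ℝ E]
    {e u : sphere (0 : E) 1} {g : sphere (0 : ℝ) 1} (hu : u ∈ ball e 1)
    (hgu : g • u ∈ ball e 1) : g = 1 := by
  have hg : |(g : ℝ)| = 1 := by
    rw [← Real.norm_eq_abs]
    exact norm_eq_of_mem_sphere g
  rcases (abs_eq zero_le_one).mp hg with hg | hg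
  · exact Subtype.ext hg
  · rw [mem_ball, Subtype.dist_eq, dist_eq_norm] at hu hgu
    change ‖(g : ℝ) • (u : E) - e‖ < 1 at hgu
    rw [hg, neg_one_smul] at hgu
    -- `u` and `-u` are at distance 2, so they cannot both lie in a ball of radius 1.
    have htri : ‖(2 : ℝ) • (u : E)‖ ≤ ‖(u : E) - e‖ + ‖-(u : E) - e‖ := by
      rw [show (2 : ℝ) • (u : E) = ((u : E) - e) - (-(u : E) - e) by module]
      exact norm_sub_le _ _
    rw [norm_smul, norm_eq_of_mem_sphere u] at htri
    norm_num at htri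
    linarith

namespace Projectivization

variable {E : Type*} [NormedAddCommGroup E] [NormedSpace ℝ E]

noncomputable def ofUnitSphere (u : sphere (0 : E) 1) : ℙ ℝ E :=
  mk ℝ (u : E) (ne_zero_of_mem_unit_sphere u)

theorem ofUnitSphere_eq_iff {u w : sphere (0 : E) 1} :
    ofUnitSphere u = ofUnitSphere w ↔ u ∈ MulAction.orbit (sphere (0 : ℝ) 1) w := by
  rw [ofUnitSphere, ofUnitSphere, mk_eq_mk_iff']
  constructor
  · rintro ⟨a, ha⟩
    have ha₁ : ‖a‖ = 1 := by simpa [norm_smul] using congrArg norm ha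
    exact ⟨⟨a, mem_sphere_zero_iff_norm.mpr ha₁⟩, Subtype.ext ha⟩
  · rintro ⟨g, rfl⟩
    exact ⟨g, rfl⟩

theorem ofUnitSphere_neg (u : sphere (0 : E) 1) : ofUnitSphere (-u) = ofUnitSphere u :=
  (mk_eq_mk_iff' ℝ _ _ _ _).mpr ⟨-1, neg_one_smul ℝ _⟩

-- Mathlib puts no topology on `ℙ ℝ E`; `hq` below says that the given one is the quotient
-- topology from the nonzero vectors.
variable [TopologicalSpace (ℙ ℝ E)]

theorem isQuotientMap_ofUnitSphere
    (hq : IsQuotientMap (mk' ℝ : {v : E // v ≠ 0} → ℙ ℝ E)) :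
    IsQuotientMap (ofUnitSphere : sphere (0 : E) 1 → ℙ ℝ E) := by
  let normalize : {v : E // v ≠ 0} → sphere (0 : E) 1 := fun v =>
    ⟨‖(v : E)‖⁻¹ • (v : E), by simp [norm_smul, v.2]⟩
  have hnormalize : Continuous normalize := by
    refine Continuous.subtype_mk (Continuous.smul ?_ continuous_subtype_val) _
    exact continuous_subtype_val.norm.inv₀ fun v => norm_ne_zero_iff.mpr v.2
  refine IsQuotientMap.of_comp hnormalize ?_ ?_
  · exact hq.continuous.comp (continuous_subtype_val.subtype_mk _)
  · convert hq using 1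
    funext v
    rw [mk'_eq_mk]
    exact (mk_eq_mk_iff' ℝ _ _ _ _).mpr ⟨‖(v : E)‖⁻¹, rfl⟩

theorem isQuotientCoveringMap_ofUnitSphere
    (hq : IsQuotientMap (mk' ℝ : {v : E // v ≠ 0} → ℙ ℝ E)) :
    IsQuotientCoveringMap (ofUnitSphere : sphere (0 : E) 1 → ℙ ℝ E) (sphere (0 : ℝ) 1) where
  toIsQuotientMap := isQuotientMap_ofUnitSphere hq
  apply_eq_iff_mem_orbit := ofUnitSphere_eq_iff
  disjoint e := ⟨ball e 1, isOpen_ball.mem_nhds (mem_ball_self one_pos),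
    fun _ ⟨_, ⟨_, hu, rfl⟩, hgu⟩ => eq_one_of_smul_mem_ball hu hgu⟩

end Projectivization

/-- The fundamental group of the real projective plane is nontrivial: there is an element
`g ≠ 1`, given by the class of the loop obtained as the image in `ℝP²` of a path in the
unit sphere `S²` joining a point to its antipode. -/
theorem realProjectivePlane_fundamentalGroup_nontrivial (x₀ : RealProjectivePlane) :
    ∃ g : FundamentalGroup RealProjectivePlane x₀, g ≠ 1 ∧
      ∃ (v : EuclideanSpace ℝ (Fin 3)) (hv : v ≠ 0)
        (p : Path (⟨v, hv⟩ : {u : EuclideanSpace ℝ (Fin 3) // u ≠ 0})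
          ⟨-v, neg_ne_zero.mpr hv⟩),
        (∀ t, ‖(p t : EuclideanSpace ℝ (Fin 3))‖ = 1) ∧
        ∃ (hx : x₀ = Projectivization.mk' ℝ ⟨v, hv⟩)
          (hy : x₀ = Projectivization.mk' ℝ ⟨-v, neg_ne_zero.mpr hv⟩),
          g = FundamentalGroup.fromPath (X := TopCat.of RealProjectivePlane)
            ⟦(p.map continuous_projectivization_mk').cast hx hy⟧ := by
  have hcov := Projectivization.isQuotientCoveringMap_ofUnitSphere
    (E := EuclideanSpace ℝ (Fin 3)) isQuotientMap_quotient_mk'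
  obtain ⟨u, rfl⟩ := hcov.surjective x₀
  have : PathConnectedSpace (sphere (0 : EuclideanSpace ℝ (Fin 3)) 1) :=
    isPathConnected_iff_pathConnectedSpace.mp <| isPathConnected_sphere
      (by rw [← Module.finrank_eq_rank, finrank_euclideanSpace_fin]; norm_num) 0 zero_le_one
  let Γ : Path u (-u) := PathConnectedSpace.somePath u (-u)
  have hι : Continuous fun w : sphere (0 : EuclideanSpace ℝ (Fin 3)) 1 =>
      (⟨w, ne_zero_of_mem_unit_sphere w⟩ : {v : EuclideanSpace ℝ (Fin 3) // v ≠ 0}) :=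
    continuous_subtype_val.subtype_mk _
  refine ⟨_, fun h => ?_, u, ne_zero_of_mem_unit_sphere u, Γ.map hι,
    fun t => norm_eq_of_mem_sphere (Γ t), rfl, (Projectivization.ofUnitSphere_neg u).symm, rfl⟩
  exact hcov.isCoveringMap.not_homotopic_refl_of_lift Γ (fun _ => rfl)
    (ne_neg_of_mem_unit_sphere ℝ u) (Quotient.exact h)
end
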